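/- Suppose 0 ≤ u ∈ C²(B) satisfies a uniformly elliptic equation a^{ij}D_{ij}u + b^j D_j u = 2c > 0 on a ball B ⊆ ℝ^m, and u(p) = 0, Du(p) = 0 at some p ∈ B. Then u cannot vanish identically on any open subset of B, and the zero set {u = 0} near p is contained in an embedded (m−1)-dimensional submanifold; in particular {u = 0} has empty interior, so the complement {u > 0} is open and dense in B near p. -/

import Mathlib

/-!
Write `L u = a^{ij} D_{ij} u + b^j D_j u`. Since `L u = 2c ≠ 0` and `L` only sees the germ of `u`,
`u` cannot vanish on an open set. At a zero of `u ≥ 0` the gradient vanishes (it is a minimum),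
so there `L u` reduces to `a^{ij} D_{ij} u`, and `2c ≠ 0` forces some `D_i D_j u (p) ≠ 0`.
Near `p` every zero of `u` is then a zero of `D_j u`, a `C¹` function with nonvanishing
differential, whose zero set is a hypersurface.
-/

open Metric

/-- A set `S ⊆ ℝ^m` is an embedded `C¹` hypersurface if near each of its points it is
the zero set of a `C¹` function with nonvanishing differential. -/
def IsC1Hypersurface (m : ℕ) (S : Set (EuclideanSpace ℝ (Fin m))) : Prop :=
  ∀ x ∈ S, ∃ (g : EuclideanSpace ℝ (Fin m) → ℝ) (U : Set (EuclideanSpace ℝ (Fin m))),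
    IsOpen U ∧ x ∈ U ∧ ContDiffOn ℝ 1 g U ∧ fderiv ℝ g x ≠ 0 ∧
      S ∩ U = {y ∈ U | g y = 0}

open Filter Topology

section EllipticOperator

variable {m : ℕ}

noncomputable def ellipticOp (a : EuclideanSpace ℝ (Fin m) → Matrix (Fin m) (Fin m) ℝ)
    (b : EuclideanSpace ℝ (Fin m) → Fin m → ℝ) (u : EuclideanSpace ℝ (Fin m) → ℝ)
    (x : EuclideanSpace ℝ (Fin m)) : ℝ :=
  (∑ i : Fin m, ∑ j : Fin m, a x i j *
    fderiv ℝ (fun y => fderiv ℝ u y (EuclideanSpace.single j (1 : ℝ))) x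
      (EuclideanSpace.single i (1 : ℝ))) +
  ∑ j : Fin m, b x j * fderiv ℝ u x (EuclideanSpace.single j (1 : ℝ))

variable {a : EuclideanSpace ℝ (Fin m) → Matrix (Fin m) (Fin m) ℝ}
  {b : EuclideanSpace ℝ (Fin m) → Fin m → ℝ} {u v : EuclideanSpace ℝ (Fin m) → ℝ}
  {x : EuclideanSpace ℝ (Fin m)}

theorem Filter.EventuallyEq.ellipticOp_eq (h : u =ᶠ[𝓝 x] v) :
    ellipticOp a b u x = ellipticOp a b v x := by
  have hD := h.fderiv (𝕜 := ℝ)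
  have hD2 : ∀ j : Fin m,
      fderiv ℝ (fun y => fderiv ℝ u y (EuclideanSpace.single j (1 : ℝ))) x =
        fderiv ℝ (fun y => fderiv ℝ v y (EuclideanSpace.single j (1 : ℝ))) x := fun j =>
    (hD.fun_comp (· (EuclideanSpace.single j (1 : ℝ)))).fderiv_eq
  simp only [ellipticOp, hD2, hD.eq_of_nhds]

theorem ellipticOp_const (c : ℝ) : ellipticOp a b (fun _ => c) x = 0 := by
  simp [ellipticOp]

theorem exists_secondDeriv_ne_zero_of_fderiv_eq_zero (hDu : fderiv ℝ u x = 0)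
    (hL : ellipticOp a b u x ≠ 0) :
    ∃ i j : Fin m, fderiv ℝ (fun y => fderiv ℝ u y (EuclideanSpace.single j (1 : ℝ))) x
      (EuclideanSpace.single i (1 : ℝ)) ≠ 0 := by
  contrapose! hL
  simp [ellipticOp, hDu, hL]

end EllipticOperator

theorem fderiv_eq_zero_of_nonneg_of_eq_zero {E : Type*} [NormedAddCommGroup E]
    [NormedSpace ℝ E] {u : E → ℝ} {s : Set E} {x : E} (hs : IsOpen s)
    (hnonneg : ∀ y ∈ s, 0 ≤ u y) (hx : x ∈ s) (hux : u x = 0) : fderiv ℝ u x = 0 :=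
  IsLocalMin.fderiv_eq_zero <| eventually_of_mem (hs.mem_nhds hx) fun y hy => hux ▸ hnonneg y hy

theorem exists_isC1Hypersurface_zeroSet {m : ℕ} {g : EuclideanSpace ℝ (Fin m) → ℝ}
    {s : Set (EuclideanSpace ℝ (Fin m))} {p : EuclideanSpace ℝ (Fin m)}
    (hg : ContDiffOn ℝ 1 g s) (hs : IsOpen s) (hp : p ∈ s) (hDg : fderiv ℝ g p ≠ 0) :
    ∃ U, IsOpen U ∧ p ∈ U ∧ IsC1Hypersurface m {y ∈ U | g y = 0} := by
  have hcont : ContinuousAt (fderiv ℝ g) p :=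
    (hg.continuousOn_fderiv_of_isOpen hs le_rfl).continuousAt (hs.mem_nhds hp)
  obtain ⟨t, ht, htopen, hpt⟩ := _root_.eventually_nhds_iff.mp (hcont.eventually_ne hDg)
  refine ⟨t ∩ s, htopen.inter hs, ⟨hpt, hp⟩, fun y hy => ?_⟩
  exact ⟨g, t ∩ s, htopen.inter hs, hy.1, hg.mono Set.inter_subset_right, ht y hy.1.1,
    Set.inter_eq_left.mpr (Set.sep_subset _ _)⟩

theorem stmt_17_general (m : ℕ) (z : EuclideanSpace ℝ (Fin m)) (r : ℝ)
    (c : ℝ) (hc : 0 < c)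
    (u : EuclideanSpace ℝ (Fin m) → ℝ)
    (a : EuclideanSpace ℝ (Fin m) → Matrix (Fin m) (Fin m) ℝ)
    (b : EuclideanSpace ℝ (Fin m) → Fin m → ℝ)
    (hu : ContDiffOn ℝ 2 u (ball z r))
    (hnonneg : ∀ x ∈ ball z r, 0 ≤ u x)
    (heq : ∀ x ∈ ball z r,
      (∑ i : Fin m, ∑ j : Fin m, a x i j *
        fderiv ℝ (fun y => fderiv ℝ u y (EuclideanSpace.single j (1 : ℝ))) x
          (EuclideanSpace.single i (1 : ℝ))) +
      (∑ j : Fin m, b x j * fderiv ℝ u x (EuclideanSpace.single j (1 : ℝ))) = 2 * c)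
    (p : EuclideanSpace ℝ (Fin m)) (hp : p ∈ ball z r)
    (hDup : fderiv ℝ u p = 0) :
    (∀ O : Set (EuclideanSpace ℝ (Fin m)), IsOpen O → O ⊆ ball z r → O.Nonempty →
        ¬ ∀ x ∈ O, u x = 0) ∧
    (∃ U : Set (EuclideanSpace ℝ (Fin m)), IsOpen U ∧ p ∈ U ∧
        ∃ S, IsC1Hypersurface m S ∧ {x ∈ ball z r ∩ U | u x = 0} ⊆ S) ∧
    (∀ O : Set (EuclideanSpace ℝ (Fin m)), IsOpen O → O ⊆ ball z r → O.Nonempty →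
        ∃ x ∈ O, 0 < u x) := by
  have hL : ∀ x ∈ ball z r, ellipticOp a b u x ≠ 0 := fun x hx =>
    (heq x hx).trans_ne (by positivity)
  have hvanish : ∀ O : Set (EuclideanSpace ℝ (Fin m)), IsOpen O → O ⊆ ball z r →
      O.Nonempty → ¬ ∀ x ∈ O, u x = 0 := by
    rintro O hO hOB ⟨x, hx⟩ hzero
    have hgerm : u =ᶠ[𝓝 x] fun _ => 0 := eventually_of_mem (hO.mem_nhds hx) hzero
    exact hL x (hOB hx) (hgerm.ellipticOp_eq.trans (ellipticOp_const 0))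
  refine ⟨hvanish, ?_, fun O hO hOB hne => ?_⟩
  · obtain ⟨i, j, hij⟩ := exists_secondDeriv_ne_zero_of_fderiv_eq_zero hDup (hL p hp)
    have hDju : ContDiffOn ℝ 1
        (fun y => fderiv ℝ u y (EuclideanSpace.single j (1 : ℝ))) (ball z r) :=
      (hu.fderiv_of_isOpen isOpen_ball (by norm_num)).clm_apply contDiffOn_const
    obtain ⟨U, hU, hpU, hS⟩ := exists_isC1Hypersurface_zeroSet hDju isOpen_ball hp
      (ne_of_apply_ne (· (EuclideanSpace.single i (1 : ℝ))) hij)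
    refine ⟨U, hU, hpU, _, hS, fun x ⟨⟨hxB, hxU⟩, hux⟩ => ⟨hxU, ?_⟩⟩
    simp [fderiv_eq_zero_of_nonneg_of_eq_zero isOpen_ball hnonneg hxB hux]
  · by_contra! hpos
    exact hvanish O hO hOB hne fun x hx => le_antisymm (hpos x hx) (hnonneg x (hOB hx))

/-- for `0 ≤ u` solving the uniformly elliptic equation
`a^{ij}D_{ij}u + b^j D_j u = 2c > 0` on a ball `B` with `u(p) = 0`, `Du(p) = 0`:
`u` does not vanish on any open subset of `B`; near `p` the zero set of `u` is
contained in an embedded `(m−1)`-dimensional submanifold; and `{u > 0}` is dense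
in `B` (the zero set has empty interior). -/
theorem stmt_17 (m : ℕ) (z : EuclideanSpace ℝ (Fin m)) (r : ℝ) (hr : 0 < r)
    (c : ℝ) (hc : 0 < c)
    (u : EuclideanSpace ℝ (Fin m) → ℝ)
    (a : EuclideanSpace ℝ (Fin m) → Matrix (Fin m) (Fin m) ℝ)
    (b : EuclideanSpace ℝ (Fin m) → Fin m → ℝ)
    (hu : ContDiffOn ℝ 2 u (ball z r))
    (hell : ∀ x ∈ ball z r, (a x).PosDef)
    (hnonneg : ∀ x ∈ ball z r, 0 ≤ u x)
    (heq : ∀ x ∈ ball z r,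
      (∑ i : Fin m, ∑ j : Fin m, a x i j *
        fderiv ℝ (fun y => fderiv ℝ u y (EuclideanSpace.single j (1 : ℝ))) x
          (EuclideanSpace.single i (1 : ℝ))) +
      (∑ j : Fin m, b x j * fderiv ℝ u x (EuclideanSpace.single j (1 : ℝ))) = 2 * c)
    (p : EuclideanSpace ℝ (Fin m)) (hp : p ∈ ball z r)
    (hup : u p = 0) (hDup : fderiv ℝ u p = 0) :
    (∀ O : Set (EuclideanSpace ℝ (Fin m)), IsOpen O → O ⊆ ball z r → O.Nonempty →
        ¬ ∀ x ∈ O, u x = 0) ∧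
    (∃ U : Set (EuclideanSpace ℝ (Fin m)), IsOpen U ∧ p ∈ U ∧
        ∃ S, IsC1Hypersurface m S ∧ {x ∈ ball z r ∩ U | u x = 0} ⊆ S) ∧
    (∀ O : Set (EuclideanSpace ℝ (Fin m)), IsOpen O → O ⊆ ball z r → O.Nonempty →
        ∃ x ∈ O, 0 < u x) :=
  stmt_17_general m z r c hc u a b hu hnonneg heq p hp hDup
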